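/- Let r₁, r₂, r₃ > 0 and m₁, m₂, m₃ > 0, and let S = {(d₁₂, d₂₃, d₃₁) ∈ ℝ³ : d_ij ≥ r_i + r_j for each pair, and the three triangle inequalities hold}. Then the contact point (r₁ + r₂, r₂ + r₃, r₃ + r₁) belongs to S, and the gravitational potential U = −(m₁m₂/d₁₂ + m₂m₃/d₂₃ + m₃m₁/d₃₁) attains its unique global minimum on S at this point. Consequently, at angular momentum H = 0 the amended potential 𝓔 = U is globally minimized at the Lagrange Resting configuration, which is therefore the minimum energy configuration and is energetically stable. -/

import Mathlib

/-- The admissible configuration set: triples of mutual distances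
`(d₁₂, d₂₃, d₃₁)` satisfying the contact constraints `d_ij ≥ r_i + r_j`
and the triangle inequalities. -/
def admissibleSet (r1 r2 r3 : ℝ) : Set (ℝ × ℝ × ℝ) :=
  {d : ℝ × ℝ × ℝ |
    r1 + r2 ≤ d.1 ∧ r2 + r3 ≤ d.2.1 ∧ r3 + r1 ≤ d.2.2 ∧
    d.1 ≤ d.2.1 + d.2.2 ∧ d.2.1 ≤ d.2.2 + d.1 ∧ d.2.2 ≤ d.1 + d.2.1}

/-- The gravitational potential energy. -/
noncomputable def gravPotential (m1 m2 m3 : ℝ) (d : ℝ × ℝ × ℝ) : ℝ :=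
  -(m1 * m2 / d.1 + m2 * m3 / d.2.1 + m3 * m1 / d.2.2)

/-- The amended potential `𝓔 = H²/(2 I_H) + U`. -/
noncomputable def amendedPotential (m1 m2 m3 IS H : ℝ) (d : ℝ × ℝ × ℝ) : ℝ :=
  H ^ 2 / (2 * (m1 * m2 * d.1 ^ 2 + m2 * m3 * d.2.1 ^ 2 + m3 * m1 * d.2.2 ^ 2 + IS))
    + gravPotential m1 m2 m3 d

/-!
Each term `-mᵢmⱼ/dᵢⱼ` of the potential is strictly increasing in its distance, so `U` is
strictly increasing for the componentwise order on triples of positive distances. The contact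
constraints say precisely that every admissible configuration lies componentwise above the
Lagrange Resting configuration, which is itself admissible; hence it is the unique minimizer.
-/

open Set

theorem StrictMonoOn.prod_add {α β γ : Type*} [PartialOrder α] [PartialOrder β]
    [AddCommMonoid γ] [PartialOrder γ] [IsOrderedCancelAddMonoid γ]
    {f : α → γ} {g : β → γ} {s : Set α} {t : Set β}
    (hf : StrictMonoOn f s) (hg : StrictMonoOn g t) :
    StrictMonoOn (fun p : α × β => f p.1 + g p.2) (s ×ˢ t) := by
  rintro ⟨a, b⟩ ⟨ha, hb⟩ ⟨a', b'⟩ ⟨ha', hb'⟩ hlt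
  rcases Prod.lt_iff.mp hlt with ⟨h1, h2⟩ | ⟨h1, h2⟩
  · exact add_lt_add_of_lt_of_le (hf ha ha' h1) (hg.monotoneOn hb hb' h2)
  · exact add_lt_add_of_le_of_lt (hf.monotoneOn ha ha' h1) (hg hb hb' h2)

theorem neg_div_strictMonoOn_Ioi {c : ℝ} (hc : 0 < c) :
    StrictMonoOn (fun x : ℝ => -(c / x)) (Ioi 0) :=
  fun _ hx _ _ hlt => neg_lt_neg (div_lt_div_of_pos_left hc hx hlt)

theorem gravPotential_strictMonoOn {m1 m2 m3 : ℝ} (hm1 : 0 < m1) (hm2 : 0 < m2) (hm3 : 0 < m3) :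
    StrictMonoOn (gravPotential m1 m2 m3) (Ioi 0 ×ˢ Ioi 0 ×ˢ Ioi 0) := by
  refine ((neg_div_strictMonoOn_Ioi (mul_pos hm1 hm2)).prod_add
    ((neg_div_strictMonoOn_Ioi (mul_pos hm2 hm3)).prod_add
      (neg_div_strictMonoOn_Ioi (mul_pos hm3 hm1)))).congr fun d _ => ?_
  simp only [gravPotential]
  ring

theorem amendedPotential_zero (m1 m2 m3 IS : ℝ) (d : ℝ × ℝ × ℝ) :
    amendedPotential m1 m2 m3 IS 0 d = gravPotential m1 m2 m3 d := by
  simp [amendedPotential]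

def lagrangeResting (r1 r2 r3 : ℝ) : ℝ × ℝ × ℝ := (r1 + r2, r2 + r3, r3 + r1)

section

variable {r1 r2 r3 : ℝ}

theorem lagrangeResting_mem_admissibleSet (hr1 : 0 ≤ r1) (hr2 : 0 ≤ r2) (hr3 : 0 ≤ r3) :
    lagrangeResting r1 r2 r3 ∈ admissibleSet r1 r2 r3 := by
  refine ⟨le_rfl, le_rfl, le_rfl, ?_, ?_, ?_⟩ <;> dsimp only [lagrangeResting] <;> linarith

theorem lagrangeResting_le_of_mem_admissibleSet {d : ℝ × ℝ × ℝ}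
    (hd : d ∈ admissibleSet r1 r2 r3) : lagrangeResting r1 r2 r3 ≤ d :=
  ⟨hd.1, hd.2.1, hd.2.2.1⟩

theorem admissibleSet_subset_pos (hr1 : 0 < r1) (hr2 : 0 < r2) (hr3 : 0 < r3) :
    admissibleSet r1 r2 r3 ⊆ Ioi 0 ×ˢ Ioi 0 ×ˢ Ioi 0 := by
  rintro d ⟨h12, h23, h31, -⟩
  simp only [mem_prod, mem_Ioi]
  exact ⟨by linarith, by linarith, by linarith⟩

end

theorem lagrange_resting_min_energy_general
    (r1 r2 r3 m1 m2 m3 IS : ℝ)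
    (hr1 : 0 < r1) (hr2 : 0 < r2) (hr3 : 0 < r3)
    (hm1 : 0 < m1) (hm2 : 0 < m2) (hm3 : 0 < m3) :
    (r1 + r2, r2 + r3, r3 + r1) ∈ admissibleSet r1 r2 r3 ∧
      (∀ q ∈ admissibleSet r1 r2 r3,
        gravPotential m1 m2 m3 (r1 + r2, r2 + r3, r3 + r1) ≤ gravPotential m1 m2 m3 q) ∧
      (∀ q ∈ admissibleSet r1 r2 r3,
        gravPotential m1 m2 m3 q = gravPotential m1 m2 m3 (r1 + r2, r2 + r3, r3 + r1) →
        q = (r1 + r2, r2 + r3, r3 + r1)) ∧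
      (∀ q, amendedPotential m1 m2 m3 IS 0 q = gravPotential m1 m2 m3 q) ∧
      (∀ q ∈ admissibleSet r1 r2 r3,
        amendedPotential m1 m2 m3 IS 0 (r1 + r2, r2 + r3, r3 + r1) ≤
          amendedPotential m1 m2 m3 IS 0 q) := by
  have hU := gravPotential_strictMonoOn hm1 hm2 hm3
  have hpos := admissibleSet_subset_pos hr1 hr2 hr3
  have hmem := lagrangeResting_mem_admissibleSet hr1.le hr2.le hr3.le
  have hle : ∀ q ∈ admissibleSet r1 r2 r3,
      gravPotential m1 m2 m3 (lagrangeResting r1 r2 r3) ≤ gravPotential m1 m2 m3 q :=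
    fun q hq => hU.monotoneOn (hpos hmem) (hpos hq) (lagrangeResting_le_of_mem_admissibleSet hq)
  refine ⟨hmem, hle, fun q hq heq => ?_, amendedPotential_zero m1 m2 m3 IS, fun q hq => ?_⟩
  · by_contra hne
    have hlt := (lagrangeResting_le_of_mem_admissibleSet hq).lt_of_ne' hne
    exact (hU (hpos hmem) (hpos hq) hlt).ne' heq
  · rw [amendedPotential_zero, amendedPotential_zero]
    exact hle q hq

/-- The Lagrange Resting configuration `(r₁+r₂, r₂+r₃, r₃+r₁)` is admissible
and is the unique global minimizer of the gravitational potential `U` on the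
admissible set; consequently at `H = 0` the amended potential `𝓔 = U` is
globally minimized there, so the Lagrange Resting configuration is the minimum
energy configuration and is energetically stable. -/
theorem lagrange_resting_min_energy
    (r1 r2 r3 m1 m2 m3 IS : ℝ)
    (hr1 : 0 < r1) (hr2 : 0 < r2) (hr3 : 0 < r3)
    (hm1 : 0 < m1) (hm2 : 0 < m2) (hm3 : 0 < m3) (hIS : 0 < IS) :
    (r1 + r2, r2 + r3, r3 + r1) ∈ admissibleSet r1 r2 r3 ∧
      (∀ q ∈ admissibleSet r1 r2 r3,
        gravPotential m1 m2 m3 (r1 + r2, r2 + r3, r3 + r1) ≤ gravPotential m1 m2 m3 q) ∧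
      (∀ q ∈ admissibleSet r1 r2 r3,
        gravPotential m1 m2 m3 q = gravPotential m1 m2 m3 (r1 + r2, r2 + r3, r3 + r1) →
        q = (r1 + r2, r2 + r3, r3 + r1)) ∧
      (∀ q, amendedPotential m1 m2 m3 IS 0 q = gravPotential m1 m2 m3 q) ∧
      (∀ q ∈ admissibleSet r1 r2 r3,
        amendedPotential m1 m2 m3 IS 0 (r1 + r2, r2 + r3, r3 + r1) ≤
          amendedPotential m1 m2 m3 IS 0 q) :=
  lagrange_resting_min_energy_general r1 r2 r3 m1 m2 m3 IS hr1 hr2 hr3 hm1 hm2 hm3
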